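/- Let E be a Hermite–Biehler function with no real zeros. Then the following are equivalent: (i) z ↦ E(iz) is real entire; (ii) the functions z ↦ A(iz)² and z ↦ B(iz)² are even functions, and B has a simple zero at the origin (that is, B(0) = 0 and B'(0) ≠ 0). -/

import Mathlib

open MeasureTheory Filter

noncomputable section

/-- `F*(z) = conj (F (conj z))`. -/
def fstar (F : ℂ → ℂ) : ℂ → ℂ := fun z => (starRingEnd ℂ) (F ((starRingEnd ℂ) z))

/-- The open upper half-plane `U`. -/
def UHP : Set ℂ := {z : ℂ | 0 < z.im}

/-- A Hermite–Biehler function: entire with `|E*(z)| < |E(z)|` on the upper half-plane. -/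
def HermiteBiehler (E : ℂ → ℂ) : Prop :=
  Differentiable ℂ E ∧ ∀ z ∈ UHP, ‖fstar E z‖ < ‖E z‖

/-- `A = (E + E*)/2`. -/
def Afun (E : ℂ → ℂ) : ℂ → ℂ := fun z => (E z + fstar E z) / 2

/-- `B = (i/2)(E − E*)`. -/
def Bfun (E : ℂ → ℂ) : ℂ → ℂ := fun z => Complex.I * (E z - fstar E z) / 2

/-!
Because `E` is entire, `E(ix)` is real for all real `x` iff `E*(-z) = E(z)` (identity theorem on
the imaginary axis), that is, iff `A` is even and `B` is odd. An entire function with even square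
is even or odd, since entire functions form an integral domain; `A(0) = E(0) ≠ 0` excludes an odd
`A` and `B'(0) ≠ 0` excludes an even `B`. Conversely an odd `B` vanishes at `0`, and `B'(0) ≠ 0`
because `B/E = i(1 - E*/E)/2` maps the upper half-plane into itself, whereas a function analytic at
the boundary point `0` and vanishing there to order `k ≥ 2` maps points `r e` with `0 < arg e < π`
and small `r > 0` below ℝ for a suitable `e`, because `z ^ k` multiplies arguments by `k`.
-/

open Complex ComplexConjugate Topology

theorem Function.even_comp_mul_left_iff {R α : Type*} [DivisionRing R] {c : R} (hc : c ≠ 0)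
    (f : R → α) : (fun z => f (c * z)).Even ↔ f.Even := by
  refine ⟨fun h w => ?_, fun h z => by simp only [mul_neg, h (c * z)]⟩
  simpa [mul_neg, mul_inv_cancel_left₀ hc] using h (c⁻¹ * w)

theorem Function.Even.deriv_zero {𝕜 : Type*} [NontriviallyNormedField 𝕜] [CharZero 𝕜]
    {f : 𝕜 → 𝕜} (hf : f.Even) : deriv f 0 = 0 := by
  have h := deriv_comp_neg (f := f) (x := 0)
  simp only [funext hf, neg_zero] at h
  linear_combination h / 2

theorem differentiable_fstar {F : ℂ → ℂ} (hF : Differentiable ℂ F) :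
    Differentiable ℂ (fstar F) := fun z => by
  have h := (hF (conj z)).conj_conj
  rw [conj_conj] at h
  exact h

theorem Differentiable.eq_of_forall_I_mul_ofReal {f g : ℂ → ℂ} (hf : Differentiable ℂ f)
    (hg : Differentiable ℂ g) (h : ∀ x : ℝ, f (I * x) = g (I * x)) : f = g := by
  have hI : Tendsto (fun x : ℝ => I * x) (𝓝[≠] 0) (𝓝[≠] 0) :=
    tendsto_nhdsWithin_of_tendsto_nhds_of_eventually_within _
      (((by fun_prop : Continuous fun x : ℝ => I * x).tendsto' 0 0 (by simp)).mono_left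
        nhdsWithin_le_nhds)
      (eventually_nhdsWithin_of_forall fun x hx => by simpa using hx)
  exact AnalyticOnNhd.eq_of_frequently_eq (fun z _ => hf.analyticAt z) (fun z _ => hg.analyticAt z)
    (hI.frequently (Frequently.of_forall h))

theorem Differentiable.even_or_odd_of_even_sq {f : ℂ → ℂ} (hf : Differentiable ℂ f)
    (h : (fun z => f z ^ 2).Even) : f.Even ∨ f.Odd := by
  have hneg : Differentiable ℂ (fun z => f (-z)) := hf.comp differentiable_neg
  rcases AnalyticOnNhd.eq_zero_or_eq_zero_of_mul_eq_zero (U := Set.univ)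
      (f := fun z => f (-z) - f z) (g := fun z => f (-z) + f z)
      (fun z _ => (hneg.sub hf).analyticAt z) (fun z _ => (hneg.add hf).analyticAt z)
      (fun z _ => by linear_combination h z) isPreconnected_univ with h | h
  · exact .inl fun z => sub_eq_zero.mp (h z trivial)
  · exact .inr fun z => eq_neg_of_add_eq_zero_left (h z trivial)

theorem exists_im_exp_mul_I_mul_neg {c : ℂ} (hc : c ≠ 0) :
    ∃ t ∈ Set.Ioo 0 (2 * Real.pi), (exp (t * I) * c).im < 0 := by
  by_contra! h
  have key : ∀ t ∈ Set.Ioo 0 (2 * Real.pi), 0 ≤ Real.cos t * c.im + Real.sin t * c.re :=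
    fun t ht => by simpa [mul_im, exp_ofReal_mul_I_re, exp_ofReal_mul_I_im] using h t ht
  have hπ := Real.pi_pos
  have h₁ := key (Real.pi / 4) ⟨by positivity, by linarith⟩
  have h₂ := key Real.pi ⟨hπ, by linarith⟩
  have h₃ := key (2 * Real.pi - Real.pi / 4) ⟨by linarith, by linarith⟩
  rw [Real.sin_pi_div_four, Real.cos_pi_div_four] at h₁
  rw [Real.sin_pi, Real.cos_pi] at h₂
  rw [Real.sin_two_pi_sub, Real.cos_two_pi_sub, Real.sin_pi_div_four, Real.cos_pi_div_four] at h₃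
  have hs : 0 < √2 := by positivity
  have him : c.im = 0 := by nlinarith
  have hre : c.re = 0 := by nlinarith
  exact hc (Complex.ext (by simpa using hre) (by simpa using him))

theorem tendsto_ofReal_mul_nhdsGT_zero (e : ℂ) :
    Tendsto (fun r : ℝ => (r : ℂ) * e) (𝓝[>] 0) (𝓝 0) :=
  ((by fun_prop : Continuous fun r : ℝ => (r : ℂ) * e).tendsto' 0 0 (by simp)).mono_left
    nhdsWithin_le_nhds

theorem AnalyticAt.frequently_im_pos_and_im_nonpos {f : ℂ → ℂ} (hf : AnalyticAt ℂ f 0)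
    (h : 2 ≤ analyticOrderAt f 0) : ∃ᶠ z in 𝓝 0, 0 < z.im ∧ (f z).im ≤ 0 := by
  cases hk : analyticOrderAt f 0 with
  | top =>
    have hray := tendsto_ofReal_mul_nhdsGT_zero I
    refine hray.frequently (Eventually.frequently ?_)
    filter_upwards [self_mem_nhdsWithin, hray.eventually (analyticOrderAt_eq_top.mp hk)]
      with r (hr : 0 < r) hfr
    exact ⟨by simpa using hr, by simp [hfr]⟩
  | coe k =>
    obtain ⟨g, hg, hg0, hfg⟩ := hf.analyticOrderAt_eq_natCast.mp hk
    have hk2 : 2 ≤ k := by exact_mod_cast hk ▸ h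
    obtain ⟨t, ⟨ht0, ht2π⟩, hneg⟩ := exists_im_exp_mul_I_mul_neg hg0
    -- on the ray `r ↦ r e` into the upper half-plane, `f (r e) ≈ r ^ k exp (t I) g 0` lies below ℝ
    set e := exp ((t / k : ℝ) * I)
    have he : 0 < e.im := by
      rw [exp_ofReal_mul_I_im]
      refine Real.sin_pos_of_pos_of_lt_pi (by positivity) ?_
      rw [div_lt_iff₀ (by positivity)]
      nlinarith [mul_le_mul_of_nonneg_left (by exact_mod_cast hk2 : (2 : ℝ) ≤ k) Real.pi_pos.le]
    have hek : e ^ k = exp (t * I) := by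
      rw [← exp_nat_mul]
      congr 1
      have : (k : ℂ) ≠ 0 := by norm_cast; omega
      push_cast
      field_simp
    have hgneg : ∀ᶠ z in 𝓝 0, (exp (t * I) * g z).im < 0 :=
      ((continuous_im.continuousAt.comp (continuousAt_const.mul hg.continuousAt)).eventually
        (gt_mem_nhds hneg))
    have hray := tendsto_ofReal_mul_nhdsGT_zero e
    refine hray.frequently (Eventually.frequently ?_)
    filter_upwards [self_mem_nhdsWithin, hray.eventually (hfg.and hgneg)]
      with r (hr : 0 < r) ⟨hfr, hgr⟩
    refine ⟨by simpa using mul_pos hr he, ?_⟩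
    rw [hfr, sub_zero, smul_eq_mul, mul_pow, hek, ← ofReal_pow, mul_assoc, im_ofReal_mul]
    exact mul_nonpos_of_nonneg_of_nonpos (pow_pos hr k).le hgr.le

theorem AnalyticAt.deriv_ne_zero_of_im_pos {f : ℂ → ℂ} (hf : AnalyticAt ℂ f 0)
    (h0 : f 0 = 0) (hpos : ∀ᶠ z in 𝓝 0, 0 < z.im → 0 < (f z).im) : deriv f 0 ≠ 0 := by
  intro hder
  have h2 : 2 ≤ analyticOrderAt f 0 := by
    rw [← Nat.cast_two, natCast_le_analyticOrderAt_iff_iteratedDeriv_eq_zero hf]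
    intro i hi
    interval_cases i <;> simpa
  obtain ⟨z, hz, him, hnonpos⟩ :=
    (hpos.and_frequently (hf.frequently_im_pos_and_im_nonpos h2)).exists
  exact (hz him).not_ge hnonpos

section

variable {E : ℂ → ℂ}

theorem differentiable_Afun (hE : Differentiable ℂ E) : Differentiable ℂ (Afun E) :=
  (hE.add (differentiable_fstar hE)).div_const 2

theorem differentiable_Bfun (hE : Differentiable ℂ E) : Differentiable ℂ (Bfun E) :=
  ((differentiable_const I).mul (hE.sub (differentiable_fstar hE))).div_const 2

theorem Differentiable.forall_im_I_mul_eq_zero_iff_fstar_neg_eq (hE : Differentiable ℂ E) :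
    (∀ x : ℝ, (E (I * x)).im = 0) ↔ ∀ z, fstar E (-z) = E z := by
  have hconj (x : ℝ) : fstar E (-(I * x)) = conj (E (I * x)) := by simp [fstar]
  have hfstar_neg := (differentiable_fstar hE).comp differentiable_neg
  refine ⟨fun h => congrFun (hfstar_neg.eq_of_forall_I_mul_ofReal hE fun x => ?_), fun h x => ?_⟩
  · simpa [hconj] using conj_eq_iff_im.mpr (h x)
  · exact conj_eq_iff_im.mp ((hconj x).symm.trans (h _))

theorem forall_fstar_neg_eq_iff_even_Afun_odd_Bfun :
    (∀ z, fstar E (-z) = E z) ↔ (Afun E).Even ∧ (Bfun E).Odd := by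
  constructor
  · intro h
    have h' (z : ℂ) : E (-z) = fstar E z := by simpa using (h (-z)).symm
    exact ⟨fun z => by simp only [Afun, h, h']; ring, fun z => by simp only [Bfun, h, h']; ring⟩
  · rintro ⟨hA, hB⟩ z
    have hA := hA z
    have hB := hB z
    simp only [Afun, Bfun] at hA hB
    linear_combination hA + I * hB + (fstar E (-z) - E z + fstar E z - E (-z)) / 2 * I_sq

theorem Afun_zero_of_Bfun_zero (h : Bfun E 0 = 0) : Afun E 0 = E 0 := by
  simp only [Bfun, div_eq_zero_iff, mul_eq_zero, I_ne_zero, sub_eq_zero, false_or,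
    OfNat.ofNat_ne_zero, or_false] at h
  simp only [Afun, ← h]
  ring

namespace HermiteBiehler

theorem ne_zero (hE : HermiteBiehler E) {z : ℂ} (hz : 0 < z.im) : E z ≠ 0 :=
  norm_pos_iff.mp ((norm_nonneg _).trans_lt (hE.2 z hz))

theorem im_Bfun_div_pos (hE : HermiteBiehler E) {z : ℂ} (hz : 0 < z.im) :
    0 < (Bfun E z / E z).im := by
  have hEz := hE.ne_zero hz
  have hw : ‖fstar E z / E z‖ < 1 := by
    rw [norm_div, div_lt_one (norm_pos_iff.mpr hEz)]
    exact hE.2 z hz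
  have hBE : Bfun E z / E z = I * (1 - fstar E z / E z) / 2 := by
    simp only [Bfun]
    field_simp
  rw [hBE]
  simp only [div_ofNat_im, mul_im, I_re, I_im, sub_re, one_re, sub_im, one_im]
  linarith [re_le_norm (fstar E z / E z)]

theorem deriv_Bfun_ne_zero (hE : HermiteBiehler E) (hE0 : E 0 ≠ 0) (hB0 : Bfun E 0 = 0) :
    deriv (Bfun E) 0 ≠ 0 := by
  have hB := differentiable_Bfun hE.1
  have hderiv := (hB 0).hasDerivAt.div (hE.1 0).hasDerivAt hE0
  rw [hB0, zero_mul, sub_zero, pow_two, mul_div_mul_right _ _ hE0] at hderiv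
  have hne : deriv (Bfun E / E) 0 ≠ 0 :=
    ((hB.analyticAt 0).div (hE.1.analyticAt 0) hE0).deriv_ne_zero_of_im_pos (by simp [hB0])
      (Eventually.of_forall fun z hz => hE.im_Bfun_div_pos hz)
  rw [hderiv.deriv] at hne
  exact (div_ne_zero_iff.mp hne).1

end HermiteBiehler

end

/-- Lemma 5 of Carneiro–Littmann: for a Hermite–Biehler function `E` with no real zeros,
`z ↦ E(iz)` is real entire iff `z ↦ A(iz)²` and `z ↦ B(iz)²` are even and `B` has a
simple zero at the origin. -/
theorem hermiteBiehler_real_on_imaginary_axis_iff (E : ℂ → ℂ)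
    (hHB : HermiteBiehler E) (hnoreal : ∀ x : ℝ, E (x : ℂ) ≠ 0) :
    (∀ x : ℝ, (E (Complex.I * (x : ℂ))).im = 0) ↔
      ((∀ z : ℂ, (Afun E (Complex.I * (-z))) ^ 2 = (Afun E (Complex.I * z)) ^ 2) ∧
       (∀ z : ℂ, (Bfun E (Complex.I * (-z))) ^ 2 = (Bfun E (Complex.I * z)) ^ 2) ∧
       Bfun E 0 = 0 ∧ deriv (Bfun E) 0 ≠ 0) := by
  have hE0 : E 0 ≠ 0 := by simpa using hnoreal 0
  change _ ↔ (fun z => Afun E (I * z) ^ 2).Even ∧ (fun z => Bfun E (I * z) ^ 2).Even ∧ _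
  rw [hHB.1.forall_im_I_mul_eq_zero_iff_fstar_neg_eq, forall_fstar_neg_eq_iff_even_Afun_odd_Bfun,
    Function.even_comp_mul_left_iff I_ne_zero (fun w => Afun E w ^ 2),
    Function.even_comp_mul_left_iff I_ne_zero (fun w => Bfun E w ^ 2)]
  constructor
  · rintro ⟨hA, hB⟩
    have hB0 := hB.map_zero
    exact ⟨hA.left_comp (· ^ 2), fun z => by simp only [hB z, neg_sq], hB0,
      hHB.deriv_Bfun_ne_zero hE0 hB0⟩
  · rintro ⟨hA2, hB2, hB0, hB'⟩
    refine ⟨((differentiable_Afun hHB.1).even_or_odd_of_even_sq hA2).resolve_right fun hA => ?_,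
      ((differentiable_Bfun hHB.1).even_or_odd_of_even_sq hB2).resolve_left fun hB => ?_⟩
    · exact hE0 (Afun_zero_of_Bfun_zero hB0 ▸ hA.map_zero)
    · exact hB' hB.deriv_zero

end
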